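/- Let T ≥ 1, let G and S be finite index sets with G ∪ S nonempty, let c_j > 0 for j ∈ G and b_i > 0 for i ∈ S, let d ∈ ℝ^T, and let N be a T×T real matrix with Nd ≠ 0. Then there exists exactly one tuple (λ, (α_j)_{j∈G}, (β̂_i)_{i∈S}) with λ ∈ ℝ^T, Nλ ≠ 0, satisfying simultaneously: (i) α_j = 1/c_j for every j ∈ G; (ii) β̂_i = (1/b_i)·(λᵀλ)/(λᵀNᵀNλ) for every i ∈ S; and (iii) d = (Σ_{i∈S} β̂_i + Σ_{j∈G} α_j)·λ. Moreover this unique solution is given by λ = δ·d, where δ⁻¹ = Σ_{i∈S} (1/b_i)·(dᵀd)/(dᵀNᵀNd) + Σ_{j∈G} 1/c_j. -/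
import Mathlib


open Matrix

private lemma quad_eq' (T : ℕ) (N : Matrix (Fin T) (Fin T) ℝ) (v : Fin T → ℝ) :
    v ⬝ᵥ (Nᵀ * N).mulVec v = (N.mulVec v) ⬝ᵥ (N.mulVec v) := by
  rw [← Matrix.mulVec_mulVec, Matrix.dotProduct_mulVec, Matrix.vecMul_transpose]

private lemma quad_pos' (T : ℕ) (N : Matrix (Fin T) (Fin T) ℝ) (v : Fin T → ℝ)
    (h : N.mulVec v ≠ 0) : 0 < v ⬝ᵥ (Nᵀ * N).mulVec v := by
  rw [quad_eq']
  rcases lt_or_eq_of_le (Finset.sum_nonneg fun i _ => mul_self_nonneg (N.mulVec v i)) with hlt | heq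
  · exact hlt
  · exact absurd (dotProduct_self_eq_zero.mp heq.symm) h

private lemma ratio_scale' (T : ℕ) (N : Matrix (Fin T) (Fin T) ℝ) (d : Fin T → ℝ)
    (s : ℝ) (hs : s ≠ 0) (a : ℝ) :
    a * ((s • d) ⬝ᵥ (s • d)) / ((s • d) ⬝ᵥ (Nᵀ * N).mulVec (s • d))
      = a * (d ⬝ᵥ d) / (d ⬝ᵥ (Nᵀ * N).mulVec d) := by
  rw [Matrix.mulVec_smul, smul_dotProduct, dotProduct_smul,
    smul_dotProduct, dotProduct_smul, smul_eq_mul, smul_eq_mul,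
    smul_eq_mul, smul_eq_mul,
    show a * (s * (s * (d ⬝ᵥ d))) = s * s * (a * (d ⬝ᵥ d)) by ring,
    show s * (s * (d ⬝ᵥ (Nᵀ * N).mulVec d)) = s * s * (d ⬝ᵥ (Nᵀ * N).mulVec d) by ring]
  exact mul_div_mul_left _ _ (mul_ne_zero hs hs)

/-- Competitive-equilibrium characterization of the prosumer-based market (Theorem 1):
there is exactly one tuple `(λ, α, β̂)` with `Nλ ≠ 0` satisfying the profit-maximizing
bid conditions and the power balance, and it is given by `λ = δ d` with
`δ⁻¹ = ∑_i (1/bᵢ)(dᵀd)/(dᵀNᵀNd) + ∑_j 1/cⱼ`. -/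
theorem stmt_6 (T : ℕ) (hT : 1 ≤ T)
    (G S : Type) [Fintype G] [Fintype S] (hGS : Nonempty (G ⊕ S))
    (c : G → ℝ) (hc : ∀ j, 0 < c j) (b : S → ℝ) (hb : ∀ i, 0 < b i)
    (d : Fin T → ℝ) (N : Matrix (Fin T) (Fin T) ℝ) (hNd : N.mulVec d ≠ 0) :
    (∃! p : (Fin T → ℝ) × (G → ℝ) × (S → ℝ),
        N.mulVec p.1 ≠ 0 ∧
        (∀ j : G, p.2.1 j = 1 / c j) ∧
        (∀ i : S, p.2.2 i =
          (1 / b i) * (p.1 ⬝ᵥ p.1) / (p.1 ⬝ᵥ (Nᵀ * N).mulVec p.1)) ∧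
        d = (∑ i : S, p.2.2 i + ∑ j : G, p.2.1 j) • p.1) ∧
    (∀ p : (Fin T → ℝ) × (G → ℝ) × (S → ℝ),
        (N.mulVec p.1 ≠ 0 ∧
         (∀ j : G, p.2.1 j = 1 / c j) ∧
         (∀ i : S, p.2.2 i =
           (1 / b i) * (p.1 ⬝ᵥ p.1) / (p.1 ⬝ᵥ (Nᵀ * N).mulVec p.1)) ∧
         d = (∑ i : S, p.2.2 i + ∑ j : G, p.2.1 j) • p.1) →
        p.1 = (∑ i : S, (1 / b i) * (d ⬝ᵥ d) / (d ⬝ᵥ (Nᵀ * N).mulVec d) +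
               ∑ j : G, 1 / c j)⁻¹ • d) := by
  have hqd : 0 < d ⬝ᵥ (Nᵀ * N).mulVec d := quad_pos' T N d hNd
  have hd0 : d ≠ 0 := by rintro rfl; exact hNd (by simp)
  set K : ℝ := ∑ i : S, (1 / b i) * (d ⬝ᵥ d) / (d ⬝ᵥ (Nᵀ * N).mulVec d) + ∑ j : G, 1 / c j
    with hK
  have hdd : 0 < d ⬝ᵥ d := by
    rcases lt_or_eq_of_le (Finset.sum_nonneg fun i _ => mul_self_nonneg (d i)) with hlt | heq
    · exact hlt
    · exact absurd (dotProduct_self_eq_zero.mp heq.symm) hd0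
  have hterm : ∀ i : S, 0 < (1 / b i) * (d ⬝ᵥ d) / (d ⬝ᵥ (Nᵀ * N).mulVec d) := fun i =>
    div_pos (mul_pos (by have := hb i; positivity) hdd) hqd
  have hK0 : 0 < K := by
    rcases hGS with ⟨j | i⟩
    · have h1 : 0 ≤ ∑ i : S, (1 / b i) * (d ⬝ᵥ d) / (d ⬝ᵥ (Nᵀ * N).mulVec d) :=
        Finset.sum_nonneg fun i _ => (hterm i).le
      have h2 : 0 < ∑ j : G, 1 / c j :=
        Finset.sum_pos (fun j _ => by have := hc j; positivity) ⟨j, Finset.mem_univ j⟩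
      exact hK ▸ add_pos_of_nonneg_of_pos h1 h2
    · have h1 : 0 < ∑ i : S, (1 / b i) * (d ⬝ᵥ d) / (d ⬝ᵥ (Nᵀ * N).mulVec d) :=
        Finset.sum_pos (fun i _ => hterm i) ⟨i, Finset.mem_univ i⟩
      have h2 : 0 ≤ ∑ j : G, 1 / c j :=
        Finset.sum_nonneg fun j _ => by have := hc j; positivity
      exact hK ▸ add_pos_of_pos_of_nonneg h1 h2
  have hKne : K ≠ 0 := ne_of_gt hK0
  have hKinv : K⁻¹ ≠ 0 := inv_ne_zero hKne
  -- the candidate solution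
  set p₀ : (Fin T → ℝ) × (G → ℝ) × (S → ℝ) :=
    (K⁻¹ • d, fun j => 1 / c j,
      fun i => (1 / b i) * (d ⬝ᵥ d) / (d ⬝ᵥ (Nᵀ * N).mulVec d)) with hp₀
  have hprop : N.mulVec p₀.1 ≠ 0 ∧
      (∀ j : G, p₀.2.1 j = 1 / c j) ∧
      (∀ i : S, p₀.2.2 i =
        (1 / b i) * (p₀.1 ⬝ᵥ p₀.1) / (p₀.1 ⬝ᵥ (Nᵀ * N).mulVec p₀.1)) ∧
      d = (∑ i : S, p₀.2.2 i + ∑ j : G, p₀.2.1 j) • p₀.1 := by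
    refine ⟨?_, fun j => rfl, fun i => ?_, ?_⟩
    · rw [Matrix.mulVec_smul]
      exact smul_ne_zero hKinv hNd
    · exact (ratio_scale' T N d K⁻¹ hKinv (1 / b i)).symm
    · show d = K • (K⁻¹ • d)
      rw [smul_smul, mul_inv_cancel₀ hKne, one_smul]
  -- uniqueness
  have huniq : ∀ p : (Fin T → ℝ) × (G → ℝ) × (S → ℝ),
      (N.mulVec p.1 ≠ 0 ∧
       (∀ j : G, p.2.1 j = 1 / c j) ∧
       (∀ i : S, p.2.2 i =
         (1 / b i) * (p.1 ⬝ᵥ p.1) / (p.1 ⬝ᵥ (Nᵀ * N).mulVec p.1)) ∧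
       d = (∑ i : S, p.2.2 i + ∑ j : G, p.2.1 j) • p.1) → p = p₀ := by
    rintro ⟨l, α, β⟩ ⟨h1, h2, h3, h4⟩
    simp only at h1 h2 h3 h4 ⊢
    set M : ℝ := ∑ i : S, β i + ∑ j : G, α j with hM
    have hM0 : M ≠ 0 := by
      rintro hM0
      rw [hM0, zero_smul] at h4
      exact hd0 h4
    have hl : l = M⁻¹ • d := by
      rw [h4, smul_smul, inv_mul_cancel₀ hM0, one_smul]
    have hβ : ∀ i : S, β i = (1 / b i) * (d ⬝ᵥ d) / (d ⬝ᵥ (Nᵀ * N).mulVec d) := by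
      intro i
      rw [h3 i, hl, ratio_scale' T N d M⁻¹ (inv_ne_zero hM0) (1 / b i)]
    have hMK : M = K := by
      rw [hM, hK]
      congr 1
      · exact Finset.sum_congr rfl fun i _ => hβ i
      · exact Finset.sum_congr rfl fun j _ => h2 j
    refine Prod.ext ?_ (Prod.ext ?_ ?_)
    · simpa [hMK] using hl
    · exact funext h2
    · exact funext hβ
  constructor
  · exact ⟨p₀, hprop, fun q hq => huniq q hq⟩
  · intro p hp
    have := huniq p hp
    rw [this]
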